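/- arXiv:2205.11282 — 2 statements merged into one kernel-verified Lean document; each statement's English description precedes it below -/
import Mathlib

section
/- (Delta System Lemma, countable case with fixed cardinality) Every infinite family of pairwise distinct finite subsets of a set Γ, all of the same finite cardinality k, contains an infinite subfamily (A_j)_{j≥1} and a finite set Δ ⊆ Γ such that A_i ∩ A_j = Δ for all i ≠ j, and |Δ| ≤ k − 1. -/
/-!
Induction on `k`. If some point `x` lies in infinitely many members of the family, remove `x`
from those members, find a delta system among the resulting `(k - 1)`-sets by induction, and put
`x` back into the sets and the root. Otherwise every finite set meets only finitely many members,
so members disjoint from everything chosen so far can be picked greedily: a delta system with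
empty root. In both cases the root has fewer than `k` elements, and for sets of equal size
`k` this is the same as the members being pairwise distinct.
-/

open Finset Function

section

variable {ι α : Type*}

theorem exists_mem_disjoint_of_finite_mem {𝒜 : Set (Finset α)} (h𝒜 : 𝒜.Infinite)
    (hfin : ∀ x, {A ∈ 𝒜 | x ∈ A}.Finite) (S : Finset α) : ∃ A ∈ 𝒜, Disjoint A S := by
  have hmeet : {A ∈ 𝒜 | ¬Disjoint A S}.Finite := by
    refine (S.finite_toSet.biUnion fun x _ => hfin x).subset ?_
    rintro A ⟨hA, hAS⟩
    obtain ⟨x, hxA, hxS⟩ := not_disjoint_iff.mp hAS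
    exact Set.mem_biUnion hxS ⟨hA, hxA⟩
  obtain ⟨A, hA, hAS⟩ := (h𝒜.sdiff hmeet).nonempty
  exact ⟨A, hA, not_not.mp fun h => hAS ⟨hA, h⟩⟩

variable [DecidableEq α]

def IsDeltaSystem (A : ι → Finset α) (Δ : Finset α) : Prop :=
  Pairwise fun i j => A i ∩ A j = Δ

namespace IsDeltaSystem

variable {A : ι → Finset α} {Δ : Finset α} {k : ℕ}

theorem insert (h : IsDeltaSystem A Δ) (x : α) :
    IsDeltaSystem (fun i => insert x (A i)) (insert x Δ) := fun i j hij => by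
  change Insert.insert x (A i) ∩ Insert.insert x (A j) = _
  rw [← insert_inter_distrib, h hij]

theorem of_pairwise_disjoint (h : Pairwise (Disjoint on A)) : IsDeltaSystem A ∅ :=
  fun _ _ hij => disjoint_iff_inter_eq_empty.mp (h hij)

theorem injective_iff_card_lt [Nontrivial ι] (h : IsDeltaSystem A Δ) (hcard : ∀ i, #(A i) = k) :
    Injective A ↔ #Δ < k := by
  obtain ⟨i, j, hij⟩ := exists_pair_ne ι
  constructor
  · intro hA
    have hΔi : Δ ⊆ A i := h hij ▸ inter_subset_left
    have hΔj : Δ ⊆ A j := h hij ▸ inter_subset_right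
    have hΔne : Δ ≠ A i := by
      rintro rfl
      exact hij (hA (eq_of_subset_of_card_le hΔj (by rw [hcard, hcard])))
    exact hcard i ▸ card_lt_card (hΔi.ssubset_of_ne hΔne)
  · intro hΔ i' j' hA
    by_contra hne
    have : A i' = Δ := by rw [← h hne, hA, inter_self]
    exact hΔ.ne (this ▸ hcard i')

end IsDeltaSystem

theorem exists_pairwise_disjoint_seq {𝒜 : Set (Finset α)}
    (h : ∀ S : Finset α, ∃ A ∈ 𝒜, Disjoint A S) :
    ∃ A : ℕ → Finset α, (∀ n, A n ∈ 𝒜) ∧ Pairwise (Disjoint on A) := by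
  choose f hf𝒜 hfS using h
  -- `U n` is the union of the first `n` chosen sets; the next one is chosen disjoint from it.
  let U : ℕ → Finset α := fun n => Nat.rec ∅ (fun _ S => S ∪ f S) n
  have hU : Monotone U := monotone_nat_of_le_succ fun _ => subset_union_left
  refine ⟨fun n => f (U n), fun n => hf𝒜 _, (pairwise_disjoint_on _).mpr fun m n hmn => ?_⟩
  have hmU : f (U m) ⊆ U n := subset_union_right.trans (hU (Nat.succ_le_of_lt hmn))
  exact (hfS (U n)).symm.mono_left hmU

theorem exists_isDeltaSystem_card_lt (k : ℕ) {𝒜 : Set (Finset α)} (h𝒜 : 𝒜.Infinite)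
    (hcard : ∀ A ∈ 𝒜, #A = k) :
    ∃ A : ℕ → Finset α, (∀ n, A n ∈ 𝒜) ∧ ∃ Δ, IsDeltaSystem A Δ ∧ #Δ < k := by
  induction k generalizing 𝒜 with
  | zero =>
    exact absurd ((Set.finite_singleton ∅).subset fun A hA => card_eq_zero.mp (hcard A hA)) h𝒜
  | succ k ih =>
    by_cases hx : ∃ x, {A ∈ 𝒜 | x ∈ A}.Infinite
    · obtain ⟨x, hx⟩ := hx
      have herase : ((·.erase x) '' {A ∈ 𝒜 | x ∈ A}).Infinite :=
        hx.image ((erase_injOn' x).mono fun _ hA => hA.2)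
      obtain ⟨B, hB, Δ, hΔ, hΔk⟩ := ih herase <| by
        rintro _ ⟨A, ⟨hA, hxA⟩, rfl⟩
        rw [card_erase_of_mem hxA, hcard A hA, Nat.add_sub_cancel]
      refine ⟨fun n => Insert.insert x (B n), fun n => ?_, _, hΔ.insert x,
        (card_insert_le x Δ).trans_lt (Nat.succ_lt_succ hΔk)⟩
      obtain ⟨A, ⟨hA, hxA⟩, hAB⟩ := hB n
      change insert x (B n) ∈ 𝒜
      rwa [← hAB, insert_erase hxA]
    · push Not at hx
      obtain ⟨A, hA, hdisj⟩ := exists_pairwise_disjoint_seq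
        (exists_mem_disjoint_of_finite_mem h𝒜 hx)
      exact ⟨A, hA, ∅, .of_pairwise_disjoint hdisj, k.succ_pos⟩

end

/-- Delta System Lemma, countable case with fixed cardinality: every infinite
family of finite subsets of `Γ`, all of cardinality `k`, contains an infinite
subfamily forming a delta system whose root `Δ` has `|Δ| ≤ k - 1`. -/
theorem stmt_9 (Γ : Type*) [DecidableEq Γ] (k : ℕ) (𝒜 : Set (Finset Γ)) (h𝒜 : 𝒜.Infinite)
    (hcard : ∀ A ∈ 𝒜, A.card = k) :
    ∃ A : ℕ → Finset Γ, Function.Injective A ∧ (∀ j, A j ∈ 𝒜) ∧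
      ∃ Δ : Finset Γ, (∀ i j, i ≠ j → A i ∩ A j = Δ) ∧ Δ.card ≤ k - 1 := by
  obtain ⟨A, hA, Δ, hΔ, hΔk⟩ := exists_isDeltaSystem_card_lt k h𝒜 hcard
  have hinj : Function.Injective A :=
    (hΔ.injective_iff_card_lt fun n => hcard _ (hA n)).mpr hΔk
  exact ⟨A, hinj, hA, Δ, fun _ _ hij => hΔ hij, by omega⟩
end

section
/- Let 1 ≤ p < ∞, let (δ_k) and (θ_k) be decreasing positive sequences with (1+δ_{k+1})/(1+δ_k) < 1 − 2θ_{k+1} for all k ≥ 0, let x ∈ ℓ_p(Γ) with sup over nonempty finite A of (1+δ_{|A|})^2‖Ax‖_p ≤ 1, and let k_0 ∈ ℕ be such that φ_{k+1}(x) ≤ φ_k(x) for all k ≥ k_0, where φ_k(x) = (1+δ_k) sup_{|A|=k}‖Ax‖_p. Then for every finite A ⊆ Γ with |A| > k_0, (1+δ_{|A|})^2 ‖Ax‖_p < 1 − 2θ_{k_0+1}. -/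
/-- Part of the proof of Claim 1: if `ν(x) ≤ 1` and `φ_k(x)` is non-increasing
from `k₀` on, where `φ_k(x) = (1+δ_k) sup_{|A|=k} ‖Ax‖_p`, then for every
finite `A ⊆ Γ` with `|A| > k₀` one has
`(1+δ_{|A|})^2 ‖Ax‖_p < 1 − 2θ_{k₀+1}`. -/
theorem stmt_19 (Γ : Type*) [Infinite Γ] (p : ℝ) (hp : 1 ≤ p)
    (δ θ : ℕ → ℝ) (hδpos : ∀ k, 0 < δ k) (hθpos : ∀ k, 0 < θ k)
    (hδdec : ∀ j k : ℕ, j ≤ k → δ k ≤ δ j)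
    (hθdec : ∀ j k : ℕ, j ≤ k → θ k ≤ θ j)
    (hratio : ∀ k : ℕ, (1 + δ (k + 1)) / (1 + δ k) < 1 - 2 * θ (k + 1))
    (x : Γ → ℝ) (hx : Summable (fun γ => |x γ| ^ p))
    (hν : ∀ A : Finset Γ, A.Nonempty →
      (1 + δ A.card) ^ 2 * (∑ γ ∈ A, |x γ| ^ p) ^ (1 / p) ≤ 1)
    (k₀ : ℕ) (hk₀ : 1 ≤ k₀)
    (hφ : ∀ k : ℕ, k₀ ≤ k →
      (1 + δ (k + 1)) *
          sSup {r : ℝ | ∃ A : Finset Γ, A.card = k + 1 ∧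
            r = (∑ γ ∈ A, |x γ| ^ p) ^ (1 / p)} ≤
        (1 + δ k) *
          sSup {r : ℝ | ∃ A : Finset Γ, A.card = k ∧
            r = (∑ γ ∈ A, |x γ| ^ p) ^ (1 / p)}) :
    ∀ A : Finset Γ, k₀ < A.card →
      (1 + δ A.card) ^ 2 * (∑ γ ∈ A, |x γ| ^ p) ^ (1 / p) <
        1 - 2 * θ (k₀ + 1) := by
  intro A hA
  set S : ℕ → Set ℝ := fun k =>
    {r : ℝ | ∃ A : Finset Γ, A.card = k ∧ r = (∑ γ ∈ A, |x γ| ^ p) ^ (1 / p)} with hS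
  have hδ1 : ∀ k, (0:ℝ) < 1 + δ k := fun k => by linarith [hδpos k]
  have hone : ∀ k, (1:ℝ) ≤ (1 + δ k) ^ 2 := fun k => by nlinarith [hδpos k]
  -- elements of S k are nonnegative
  have hnn : ∀ k, ∀ r ∈ S k, 0 ≤ r := by
    rintro k r ⟨B, _, rfl⟩
    exact Real.rpow_nonneg (Finset.sum_nonneg fun γ _ => Real.rpow_nonneg (abs_nonneg _) p) _
  -- for k ≥ 1, elements of S k are at most 1/(1+δ k)^2
  have hbound : ∀ k, 1 ≤ k → ∀ r ∈ S k, r ≤ 1 / (1 + δ k) ^ 2 := by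
    rintro k hk r ⟨B, hB, rfl⟩
    have hBne : B.Nonempty := Finset.card_pos.mp (hB ▸ hk)
    have := hν B hBne
    rw [hB] at this
    rw [le_div_iff₀ (pow_pos (hδ1 k) 2)]
    linarith [this]
  have hbdd : ∀ k, 1 ≤ k → BddAbove (S k) :=
    fun k hk => ⟨1 / (1 + δ k) ^ 2, fun r hr => hbound k hk r hr⟩
  have hSne : ∀ k, (S k).Nonempty := by
    intro k
    obtain ⟨B, hB⟩ := Infinite.exists_subset_card_eq Γ k
    exact ⟨_, B, hB, rfl⟩
  have hs_nonneg : ∀ k, 1 ≤ k → 0 ≤ sSup (S k) := by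
    intro k hk
    obtain ⟨r, hr⟩ := hSne k
    exact le_trans (hnn k r hr) (le_csSup (hbdd k hk) hr)
  have hs_le : ∀ k, 1 ≤ k → sSup (S k) ≤ 1 / (1 + δ k) ^ 2 :=
    fun k hk => csSup_le (hSne k) (hbound k hk)
  -- φ is nonincreasing from k₀ on
  have hmono : ∀ n, k₀ ≤ n → (1 + δ n) * sSup (S n) ≤ (1 + δ k₀) * sSup (S k₀) := by
    intro n hn
    induction n, hn using Nat.le_induction with
    | base => exact le_refl _
    | succ n hn ih => exact le_trans (hφ n hn) ih
  set n := A.card with hn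
  have hn1 : k₀ + 1 ≤ n := hA
  have hAle : (∑ γ ∈ A, |x γ| ^ p) ^ (1 / p) ≤ sSup (S n) :=
    le_csSup (hbdd n (le_trans (le_trans hk₀ (Nat.le_succ _)) hn1)) ⟨A, rfl, rfl⟩
  have hδn : 1 + δ n ≤ 1 + δ (k₀ + 1) := by linarith [hδdec (k₀+1) n hn1]
  have key : (1 + δ n) ^ 2 * (∑ γ ∈ A, |x γ| ^ p) ^ (1 / p) ≤
      (1 + δ (k₀ + 1)) * ((1 + δ k₀) * sSup (S k₀)) := by
    have h1 : (1 + δ n) ^ 2 * (∑ γ ∈ A, |x γ| ^ p) ^ (1 / p) ≤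
        (1 + δ n) * ((1 + δ n) * sSup (S n)) := by
      rw [sq, mul_assoc]
      exact mul_le_mul_of_nonneg_left
        (mul_le_mul_of_nonneg_left hAle (hδ1 n).le) (hδ1 n).le
    refine h1.trans (mul_le_mul hδn (hmono n (le_trans (Nat.le_succ _) hn1)) ?_ (hδ1 _).le)
    exact mul_nonneg (hδ1 n).le (hs_nonneg n (le_trans hk₀ (le_trans (Nat.le_succ _) hn1)))
  have hfin : (1 + δ (k₀ + 1)) * ((1 + δ k₀) * sSup (S k₀)) < 1 - 2 * θ (k₀ + 1) := by
    have h2 : (1 + δ k₀) * sSup (S k₀) ≤ 1 / (1 + δ k₀) := by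
      have h := hs_le k₀ hk₀
      rw [le_div_iff₀ (pow_pos (hδ1 k₀) 2)] at h
      rw [le_div_iff₀ (hδ1 k₀)]
      have heq : (1 + δ k₀) * sSup (S k₀) * (1 + δ k₀) = sSup (S k₀) * (1 + δ k₀) ^ 2 := by
        ring
      rw [heq]; exact h
    calc (1 + δ (k₀ + 1)) * ((1 + δ k₀) * sSup (S k₀))
        ≤ (1 + δ (k₀ + 1)) * (1 / (1 + δ k₀)) :=
          mul_le_mul_of_nonneg_left h2 (hδ1 _).le
      _ = (1 + δ (k₀ + 1)) / (1 + δ k₀) := by ring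
      _ < 1 - 2 * θ (k₀ + 1) := hratio k₀
  exact lt_of_le_of_lt key hfin
end
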